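/- Every polyomino with at least 5 cells contains a subset congruent to the straight tromino S_3 or a subset congruent to the S-tetromino Z_2. -/

import Mathlib

/-- A cell of the rectangular board. -/
abbrev Cell : Type := ℤ × ℤ

/-- Two cells are adjacent if they differ by (±1,0) or (0,±1). -/
def Adjacent (a b : Cell) : Prop :=
  (a.1 - b.1).natAbs + (a.2 - b.2).natAbs = 1

/-- A polyomino is a nonempty subset of ℤ² connected through adjacent cells. -/
def IsPolyomino (P : Set Cell) : Prop :=
  P.Nonempty ∧ ∀ a ∈ P, ∀ b ∈ P,
    Relation.ReflTransGen (fun x y => x ∈ P ∧ y ∈ P ∧ Adjacent x y) a b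

/-- Symmetries of the board: compositions of an integer translation with one of the
eight signed/swap linear maps (rotations by multiples of 90° and reflections). -/
def IsSym (f : Cell → Cell) : Prop :=
  ∃ (t : Cell) (a b s : Bool), ∀ p : Cell,
    f p = (t.1 + (if a then (if s then p.2 else p.1) else -(if s then p.2 else p.1)),
           t.2 + (if b then (if s then p.1 else p.2) else -(if s then p.1 else p.2)))

/-- Two subsets of ℤ² are congruent if one is the image of the other under a symmetry. -/
def BoardCongruent (A B : Set Cell) : Prop := ∃ f, IsSym f ∧ f '' A = B

/-- `Ancestor P Q` (written P ⊑ Q): `Q` contains a subset congruent to `P`. -/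
def Ancestor (P Q : Set Cell) : Prop := ∃ S, S ⊆ Q ∧ BoardCongruent P S

/-- `Simpler S T` (written S ⪯ T): every member of `T` has an ancestor in `S`. -/
def Simpler (S T : Set (Set Cell)) : Prop := ∀ Q ∈ T, ∃ P ∈ S, Ancestor P Q

/-- A team: a set of polyominoes no member of which is an ancestor of another member. -/
def IsTeam (F : Set (Set Cell)) : Prop :=
  (∀ P ∈ F, IsPolyomino P) ∧ ∀ P ∈ F, ∀ Q ∈ F, P ≠ Q → ¬ Ancestor P Q

/-- The cells marked so far, given the list of the maker's moves and
the list of the breaker's (pairs of) moves. -/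
def markedCells (ms : List Cell) (bs : List (Cell × Cell)) : Set Cell :=
  {c | c ∈ ms ∨ ∃ p ∈ bs, c = p.1 ∨ c = p.2}

/-- Maker strategy: from the maker's past moves and the breaker's past moves,
produce the maker's next mark. -/
abbrev MStrategy := List Cell → List (Cell × Cell) → Cell

/-- Breaker strategy: from the maker's moves so far (including his latest one) and the
breaker's past moves, produce the breaker's next two marks. -/
abbrev BStrategy := List Cell → List (Cell × Cell) → Cell × Cell

/-- A legal maker strategy always marks a previously unmarked cell. -/
def MLegal (σ : MStrategy) : Prop := ∀ ms bs, σ ms bs ∉ markedCells ms bs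

/-- A legal breaker strategy always marks two distinct previously unmarked cells. -/
def BLegal (τ : BStrategy) : Prop :=
  ∀ ms bs, (τ ms bs).1 ≠ (τ ms bs).2 ∧
    (τ ms bs).1 ∉ markedCells ms bs ∧ (τ ms bs).2 ∉ markedCells ms bs

/-- The lists of moves after `n` full rounds of the weak (1,2)-achievement game,
the maker moving first in each round. -/
def play (σ : MStrategy) (τ : BStrategy) : ℕ → List Cell × List (Cell × Cell)
  | 0 => ([], [])
  | n + 1 =>
      let p := play σ τ n
      let mv := σ p.1 p.2
      (p.1 ++ [mv], p.2 ++ [τ (p.1 ++ [mv]) p.2])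

/-- The set of cells marked by the maker during the first `n` rounds. -/
def makerSet (σ : MStrategy) (τ : BStrategy) (n : ℕ) : Set Cell :=
  {c | c ∈ (play σ τ n).1}

/-- The maker achieves `F` in the play of `σ` against `τ`: at some finite stage his
marked cells contain a subset congruent to a member of `F`. -/
def Achieves (F : Set (Set Cell)) (σ : MStrategy) (τ : BStrategy) : Prop :=
  ∃ n, ∃ Q ∈ F, Ancestor Q (makerSet σ τ n)

/-- A (bounded) set of polyominoes is a winner of the weak (1,2)-achievement game if the
maker has a legal strategy achieving it against every legal breaker strategy. -/
def GameWinner (F : Set (Set Cell)) : Prop :=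
  ∃ σ, MLegal σ ∧ ∀ τ, BLegal τ → Achieves F σ τ

/-- A set of polyominoes is bounded if all its members are finite. -/
def Bounded (F : Set (Set Cell)) : Prop := ∀ P ∈ F, P.Finite

/-- `G` is a bounded restriction of `T`: `G = {F_P : P ∈ T}` for a choice of a finite
polyomino ancestor `F_P ⊑ P` for each `P ∈ T`. -/
def BoundedRestriction (T G : Set (Set Cell)) : Prop :=
  ∃ f : Set Cell → Set Cell,
    (∀ P ∈ T, (f P).Finite ∧ IsPolyomino (f P) ∧ Ancestor (f P) P) ∧ G = f '' T

/-- Winner for a possibly unbounded set of polyominoes: a bounded set is a winner if the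
maker can achieve it; an unbounded set is a winner if every bounded restriction is. -/
def Winner (F : Set (Set Cell)) : Prop :=
  (Bounded F ∧ GameWinner F) ∨
  (¬ Bounded F ∧ ∀ G, BoundedRestriction F G → GameWinner G)

/-- The skinny polyomino `S_n`: `n` cells in a horizontal row. -/
def Srow (n : ℕ) : Set Cell := {p | 0 ≤ p.1 ∧ p.1 < (n : ℤ) ∧ p.2 = 0}

/-- The one-way infinite skinny polyomino `S_∞`. -/
def Sinf : Set Cell := {p | 0 ≤ p.1 ∧ p.2 = 0}

/-- The L-tromino `L_2`. -/
def L2 : Set Cell := {(0, 0), (1, 0), (1, 1)}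

/-- The L-tetromino `L_3`. -/
def L3 : Set Cell := {(0, 0), (1, 0), (2, 0), (2, 1)}

/-- The T-tetromino `T_2`. -/
def T2 : Set Cell := {(0, 0), (1, 0), (2, 0), (1, 1)}

/-- The 2×2 square tetromino `C_2`. -/
def C2 : Set Cell := {(0, 0), (1, 0), (0, 1), (1, 1)}

/-- The S-tetromino `Z_2`. -/
def Z2 : Set Cell := {(0, 0), (1, 0), (1, 1), (2, 1)}

/-- `C_n`: a horizontal row of `n` cells plus the cells above its two end cells. -/
def Cpoly (n : ℕ) : Set Cell :=
  {p | 0 ≤ p.1 ∧ p.1 < (n : ℤ) ∧ p.2 = 0} ∪ {(0, 1), ((n : ℤ) - 1, 1)}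

/-- `Z_n`: a horizontal row of `n` cells plus the cell above one end cell and the cell
below the other end cell. -/
def Zpoly (n : ℕ) : Set Cell :=
  {p | 0 ≤ p.1 ∧ p.1 < (n : ℤ) ∧ p.2 = 0} ∪ {(0, 1), ((n : ℤ) - 1, -1)}

/-- A polyomino is skinny if all its cells lie in one row or one column. -/
def Skinny (P : Set Cell) : Prop :=
  (∃ r, ∀ p ∈ P, p.2 = r) ∨ (∃ c, ∀ p ∈ P, p.1 = c)

/-- A 2-paving: an irreflexive symmetric relation on cells in which every cell is
related to at most two other cells. -/
def TwoPaving (R : Cell → Cell → Prop) : Prop :=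
  (∀ a, ¬ R a a) ∧ (∀ a b, R a b → R b a) ∧
  ∀ a, ∃ b c, ∀ d, R a d → d = b ∨ d = c

/-- The paving strategy based on `R`: a legal breaker strategy that marks every currently
unmarked cell related by `R` to the maker's last move. -/
def PavingStrategy (R : Cell → Cell → Prop) (τ : BStrategy) : Prop :=
  BLegal τ ∧ ∀ ms bs, ∀ last ∈ ms.getLast?, ∀ c, R last c →
    c ∉ markedCells ms bs → (c = (τ ms bs).1 ∨ c = (τ ms bs).2)

/-- `Q` is killed by `R`: every subset of ℤ² congruent to `Q` contains two related cells. -/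
def Killed (R : Cell → Cell → Prop) (Q : Set Cell) : Prop :=
  ∀ S : Set Cell, BoardCongruent Q S → ∃ a ∈ S, ∃ b ∈ S, R a b

/-- The unbounded team `W = {S_∞, T_2} ∪ {C_n : n ≥ 2} ∪ {Z_n : n ≥ 2}`. -/
def Wteam : Set (Set Cell) :=
  {Sinf, T2} ∪ {P | ∃ n, 2 ≤ n ∧ P = Cpoly n} ∪ {P | ∃ n, 2 ≤ n ∧ P = Zpoly n}

/-! In a polyomino avoiding `S_3` and `Z_2`, a domino cannot be prolonged at either end, and its
two long sides cannot both be occupied. After a swap of coordinates and a reflection, the domino is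
horizontal with nothing below it; every step of a path leaving the 2×2 square above the domino then
creates an `S_3` or a `Z_2`, so the polyomino lies in that square and has at most 4 cells. -/

lemma IsPolyomino.image {P : Set Cell} {g : Cell → Cell}
    (hg : ∀ a b, Adjacent a b → Adjacent (g a) (g b)) (hP : IsPolyomino P) :
    IsPolyomino (g '' P) := by
  refine ⟨hP.1.image g, ?_⟩
  rintro _ ⟨a, ha, rfl⟩ _ ⟨b, hb, rfl⟩
  exact (hP.2 a ha b hb).lift g fun c d ⟨hc, hd, hcd⟩ =>
    ⟨Set.mem_image_of_mem g hc, Set.mem_image_of_mem g hd, hg c d hcd⟩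

lemma IsPolyomino.subset_of_adjacent_mem {P B : Set Cell} (hP : IsPolyomino P) {a : Cell}
    (ha : a ∈ P) (haB : a ∈ B) (hB : ∀ b ∈ P, b ∈ B → ∀ c ∈ P, Adjacent b c → c ∈ B) :
    P ⊆ B := by
  intro c hc
  induction hP.2 a ha c hc with
  | refl => exact haB
  | tail _ hbc ih => exact hB _ hbc.1 (ih hbc.1) _ hbc.2.1 hbc.2.2

lemma IsPolyomino.exists_adjacent {P : Set Cell} (hP : IsPolyomino P) (h : 1 < P.encard) :
    ∃ a ∈ P, ∃ b ∈ P, Adjacent a b := by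
  obtain ⟨a, b, ha, hb, hab⟩ := Set.one_lt_encard_iff.1 h
  rcases (hP.2 a ha b hb).cases_head with rfl | ⟨c, ⟨-, hc, hac⟩, -⟩
  · exact absurd rfl hab
  · exact ⟨a, ha, c, hc, hac⟩

lemma ancestor_of_image_subset {Q P : Set Cell} {f : Cell → Cell} (hf : IsSym f)
    (h : f '' Q ⊆ P) : Ancestor Q P :=
  ⟨f '' Q, h, f, hf, rfl⟩

lemma Ancestor.of_image {Q P : Set Cell} {g : Cell → Cell} (hg : Function.Involutive g)
    (hsym : ∀ f, IsSym f → IsSym (g ∘ f)) (h : Ancestor Q (g '' P)) : Ancestor Q P := by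
  obtain ⟨S, hS, f, hf, rfl⟩ := h
  refine ancestor_of_image_subset (hsym f hf) ?_
  rw [Set.image_comp]
  calc g '' (f '' Q) ⊆ g '' (g '' P) := Set.image_mono hS
    _ = P := by simp [Set.image_image, hg _]

lemma adjacent_swap {a b : Cell} (h : Adjacent a b) : Adjacent a.swap b.swap := by
  unfold Adjacent at *
  simp only [Prod.fst_swap, Prod.snd_swap]
  omega

lemma IsSym.swap_comp {f : Cell → Cell} (hf : IsSym f) : IsSym (Prod.swap ∘ f) := by
  obtain ⟨t, a, b, s, hf⟩ := hf
  refine ⟨t.swap, b, a, !s, fun p => ?_⟩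
  cases s <;> simp [hf]

lemma Ancestor.of_image_swap {Q P : Set Cell} (h : Ancestor Q (Prod.swap '' P)) :
    Ancestor Q P :=
  h.of_image Prod.swap_swap fun _ => IsSym.swap_comp

def reflectSnd (c : Cell) : Cell := (c.1, -c.2)

lemma reflectSnd_involutive : Function.Involutive reflectSnd := fun c => by simp [reflectSnd]

lemma adjacent_reflectSnd {a b : Cell} (h : Adjacent a b) :
    Adjacent (reflectSnd a) (reflectSnd b) := by
  unfold Adjacent reflectSnd at *
  simp only
  omega

lemma IsSym.reflectSnd_comp {f : Cell → Cell} (hf : IsSym f) : IsSym (reflectSnd ∘ f) := by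
  obtain ⟨t, a, b, s, hf⟩ := hf
  refine ⟨(t.1, -t.2), a, !b, s, fun p => ?_⟩
  cases b <;> simp [hf, reflectSnd, add_comm]

lemma Ancestor.of_image_reflectSnd {Q P : Set Cell} (h : Ancestor Q (reflectSnd '' P)) :
    Ancestor Q P :=
  h.of_image reflectSnd_involutive fun _ => IsSym.reflectSnd_comp

section Shapes

variable {P : Set Cell} {x y : ℤ}

lemma srow_three_eq : Srow 3 = {(0, 0), (1, 0), (2, 0)} := by
  ext ⟨a, b⟩
  simp only [Srow, Nat.cast_ofNat, Set.mem_ofPred_eq, Set.mem_insert_iff, Set.mem_singleton_iff,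
    Prod.mk.injEq]
  omega

lemma ancestor_srow_three_of_row (h0 : (x, y) ∈ P) (h1 : (x + 1, y) ∈ P)
    (h2 : (x + 1 + 1, y) ∈ P) : Ancestor (Srow 3) P := by
  refine ancestor_of_image_subset (f := fun p => (x + p.1, y + p.2))
    ⟨(x, y), true, true, false, fun _ => rfl⟩ ?_
  rw [add_assoc, one_add_one_eq_two] at h2
  simp [srow_three_eq, Set.image_insert_eq, Set.insert_subset_iff, h0, h1, h2]

lemma ancestor_z2_rising (h0 : (x, y) ∈ P) (h1 : (x + 1, y) ∈ P) (h2 : (x + 1, y + 1) ∈ P)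
    (h3 : (x + 1 + 1, y + 1) ∈ P) : Ancestor Z2 P := by
  refine ancestor_of_image_subset (f := fun p => (x + p.1, y + p.2))
    ⟨(x, y), true, true, false, fun _ => rfl⟩ ?_
  rw [add_assoc, one_add_one_eq_two] at h3
  simp [Z2, Set.image_insert_eq, Set.insert_subset_iff, h0, h1, h2, h3]

lemma ancestor_z2_falling (h0 : (x, y + 1) ∈ P) (h1 : (x + 1, y + 1) ∈ P) (h2 : (x + 1, y) ∈ P)
    (h3 : (x + 1 + 1, y) ∈ P) : Ancestor Z2 P := by
  refine ancestor_of_image_subset (f := fun p => (x + p.1, (y + 1) + -p.2))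
    ⟨(x, y + 1), true, false, false, fun _ => rfl⟩ ?_
  rw [add_assoc, one_add_one_eq_two] at h3
  simp [Z2, Set.image_insert_eq, Set.insert_subset_iff, h0, h1, h2, h3]

lemma ancestor_srow_three_of_column (h0 : (x, y) ∈ P) (h1 : (x, y + 1) ∈ P)
    (h2 : (x, y + 1 + 1) ∈ P) : Ancestor (Srow 3) P :=
  (ancestor_srow_three_of_row (P := Prod.swap '' P) ⟨_, h0, rfl⟩ ⟨_, h1, rfl⟩
    ⟨_, h2, rfl⟩).of_image_swap

lemma ancestor_z2_rising_column (h0 : (x, y) ∈ P) (h1 : (x, y + 1) ∈ P)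
    (h2 : (x + 1, y + 1) ∈ P) (h3 : (x + 1, y + 1 + 1) ∈ P) : Ancestor Z2 P :=
  (ancestor_z2_rising (P := Prod.swap '' P) ⟨_, h0, rfl⟩ ⟨_, h1, rfl⟩ ⟨_, h2, rfl⟩
    ⟨_, h3, rfl⟩).of_image_swap

lemma ancestor_z2_falling_column (h0 : (x + 1, y) ∈ P) (h1 : (x + 1, y + 1) ∈ P)
    (h2 : (x, y + 1) ∈ P) (h3 : (x, y + 1 + 1) ∈ P) : Ancestor Z2 P :=
  (ancestor_z2_falling (P := Prod.swap '' P) ⟨_, h0, rfl⟩ ⟨_, h1, rfl⟩ ⟨_, h2, rfl⟩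
    ⟨_, h3, rfl⟩).of_image_swap

end Shapes

def square (x y : ℤ) : Set Cell := {(x, y), (x + 1, y), (x, y + 1), (x + 1, y + 1)}

lemma encard_square_le (x y : ℤ) : (square x y).encard ≤ 4 := by
  have : square x y = ↑({(x, y), (x + 1, y), (x, y + 1), (x + 1, y + 1)} : Finset Cell) := by
    simp [square]
  rw [this, Set.encard_coe_eq_coe_finsetCard]
  exact_mod_cast Finset.card_le_four

section Domino

variable {P : Set Cell} {x y : ℤ}

lemma subset_square_of_notMem_below (hP : IsPolyomino P) (hS : ¬ Ancestor (Srow 3) P)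
    (hZ : ¬ Ancestor Z2 P) (h0 : (x, y) ∈ P) (h1 : (x + 1, y) ∈ P)
    (hl0 : (x, y - 1) ∉ P) (hl1 : (x + 1, y - 1) ∉ P) : P ⊆ square x y := by
  refine hP.subset_of_adjacent_mem h0 (by simp [square]) ?_
  rintro ⟨b1, b2⟩ hb hbB ⟨c1, c2⟩ hc hbc
  have hbc : (b1 - c1).natAbs + (b2 - c2).natAbs = 1 := hbc
  simp only [square, Set.mem_insert_iff, Set.mem_singleton_iff, Prod.mk.injEq] at hbB ⊢
  by_contra hcB
  rcases (by omega : c1 = x - 1 ∨ c1 = x + 1 + 1 ∨ c2 = y - 1 ∨ c2 = y + 1 + 1)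
    with hc1 | rfl | rfl | rfl
  · obtain rfl : x = c1 + 1 := by omega
    obtain rfl : b1 = c1 + 1 := by omega
    obtain rfl : b2 = c2 := by omega
    rcases (by omega : b2 = y ∨ b2 = y + 1) with rfl | rfl
    · exact hS (ancestor_srow_three_of_row hc h0 h1)
    · exact hZ (ancestor_z2_falling hc hb h0 h1)
  · obtain rfl : b1 = x + 1 := by omega
    obtain rfl : b2 = c2 := by omega
    rcases (by omega : b2 = y ∨ b2 = y + 1) with rfl | rfl
    · exact hS (ancestor_srow_three_of_row h0 h1 hc)
    · exact hZ (ancestor_z2_rising h0 h1 hb hc)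
  · rcases (by omega : c1 = x ∨ c1 = x + 1) with rfl | rfl
    · exact hl0 hc
    · exact hl1 hc
  · obtain rfl : b1 = c1 := by omega
    obtain rfl : b2 = y + 1 := by omega
    rcases (by omega : b1 = x ∨ b1 = x + 1) with rfl | rfl
    · exact hS (ancestor_srow_three_of_column h0 hb hc)
    · exact hS (ancestor_srow_three_of_column h1 hb hc)

lemma notMem_above_of_mem_below (hS : ¬ Ancestor (Srow 3) P) (hZ : ¬ Ancestor Z2 P)
    (h0 : (x, y) ∈ P) (h1 : (x + 1, y) ∈ P) (hl : (x, y - 1) ∈ P ∨ (x + 1, y - 1) ∈ P) :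
    (x, y + 1) ∉ P ∧ (x + 1, y + 1) ∉ P := by
  obtain ⟨z, rfl⟩ : ∃ z, y = z + 1 := ⟨y - 1, by ring⟩
  rw [add_sub_cancel_right] at hl
  refine ⟨fun hu => ?_, fun hu => ?_⟩ <;> rcases hl with hl | hl
  · exact hS (ancestor_srow_three_of_column hl h0 hu)
  · exact hZ (ancestor_z2_falling_column hl h1 h0 hu)
  · exact hZ (ancestor_z2_rising_column hl h0 h1 hu)
  · exact hS (ancestor_srow_three_of_column hl h1 hu)

lemma encard_le_four_of_horizontal_domino (hP : IsPolyomino P) (hS : ¬ Ancestor (Srow 3) P)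
    (hZ : ¬ Ancestor Z2 P) (h0 : (x, y) ∈ P) (h1 : (x + 1, y) ∈ P) : P.encard ≤ 4 := by
  by_cases hl : (x, y - 1) ∈ P ∨ (x + 1, y - 1) ∈ P
  · obtain ⟨hu0, hu1⟩ := notMem_above_of_mem_below hS hZ h0 h1 hl
    have hbelow : ∀ u, (u, y + 1) ∉ P → (u, -y - 1) ∉ reflectSnd '' P := by
      rintro u hu ⟨c, hc, hceq⟩
      rw [reflectSnd_involutive.eq_iff] at hceq
      subst hceq
      simp_all [reflectSnd, add_comm]
    rw [← reflectSnd_involutive.injective.encard_image]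
    refine (Set.encard_mono (subset_square_of_notMem_below (x := x) (y := -y)
      (hP.image fun _ _ => adjacent_reflectSnd) (fun h => hS h.of_image_reflectSnd)
      (fun h => hZ h.of_image_reflectSnd) ⟨_, h0, rfl⟩ ⟨_, h1, rfl⟩
      (hbelow x hu0) (hbelow (x + 1) hu1))).trans (encard_square_le _ _)
  · rw [not_or] at hl
    exact (Set.encard_mono (subset_square_of_notMem_below hP hS hZ h0 h1 hl.1 hl.2)).trans
      (encard_square_le x y)

lemma encard_le_four_of_adjacent (hP : IsPolyomino P) (hS : ¬ Ancestor (Srow 3) P)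
    (hZ : ¬ Ancestor Z2 P) {a b : Cell} (ha : a ∈ P) (hb : b ∈ P) (hab : Adjacent a b) :
    P.encard ≤ 4 := by
  obtain ⟨a1, a2⟩ := a
  obtain ⟨b1, b2⟩ := b
  have hab : (a1 - b1).natAbs + (a2 - b2).natAbs = 1 := hab
  have hvertical : ∀ {u v : ℤ}, (u, v) ∈ P → (u, v + 1) ∈ P → P.encard ≤ 4 := fun h0 h1 => by
    rw [← Prod.swap_injective.encard_image]
    exact encard_le_four_of_horizontal_domino (hP.image fun _ _ => adjacent_swap)
      (fun h => hS h.of_image_swap) (fun h => hZ h.of_image_swap) ⟨_, h0, rfl⟩ ⟨_, h1, rfl⟩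
  rcases (by omega : (b1 = a1 + 1 ∧ b2 = a2) ∨ (a1 = b1 + 1 ∧ a2 = b2) ∨
      (b1 = a1 ∧ b2 = a2 + 1) ∨ (a1 = b1 ∧ a2 = b2 + 1))
    with ⟨rfl, rfl⟩ | ⟨rfl, rfl⟩ | ⟨rfl, rfl⟩ | ⟨rfl, rfl⟩
  · exact encard_le_four_of_horizontal_domino hP hS hZ ha hb
  · exact encard_le_four_of_horizontal_domino hP hS hZ hb ha
  · exact hvertical ha hb
  · exact hvertical hb ha

end Domino

/-- every polyomino with at least 5 cells contains a subset congruent to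
the straight tromino `S_3` or a subset congruent to the S-tetromino `Z_2`. -/
theorem stmt13 (P : Set Cell) (hP : IsPolyomino P) (h5 : 5 ≤ P.encard) :
    Ancestor (Srow 3) P ∨ Ancestor Z2 P := by
  by_contra! h
  obtain ⟨a, ha, b, hb, hab⟩ := hP.exists_adjacent (lt_of_lt_of_le (by norm_num) h5)
  have h4 := encard_le_four_of_adjacent hP h.1 h.2 ha hb hab
  exact absurd (h5.trans h4) (by norm_num)
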